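/- arXiv:1409.4064 — 5 statements merged into one kernel-verified Lean document; each statement's English description precedes it below -/
import Mathlib

section
/- Farkas' lemma (inequality form): For a real m×n matrix B and vector b ∈ ℝᵐ, the system B·p ≤ b (componentwise) has a solution p ∈ ℝⁿ if and only if for every vector t ∈ ℝᵐ with t ≥ 0 and Bᵀt = 0 one has tᵀb ≥ 0. -/
open Matrix

/-! Fourier–Motzkin elimination. Let `a` be the first column of `B` and `B'` the remaining ones.
The rows of the nonnegative matrix `W` are the unit vectors `eᵢ` with `aᵢ = 0` and the vectors
`eᵢ / aᵢ - eⱼ / aⱼ` with `aᵢ > 0 > aⱼ`, so `W a = 0`. The system `W B' q ≤ W b` says exactly that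
the bounds on the first variable imposed by `B p ≤ b` at fixed `q` are compatible, so it is
solvable iff `B p ≤ b` is. By induction on the number of variables, an unsolvable system thus
has a certificate `t'` for the eliminated one, and `Wᵀ t'` is a certificate for `B p ≤ b`. -/

lemma exists_forall_le_and_forall_ge {α κ κ' : Type*} [LinearOrder α] [Nonempty α]
    [Finite κ] [Finite κ'] (l : κ → α) (u : κ' → α) (h : ∀ i j, l i ≤ u j) :
    ∃ x, (∀ i, l i ≤ x) ∧ ∀ j, x ≤ u j := by
  cases isEmpty_or_nonempty κ with
  | inr _ =>
    obtain ⟨i₀, hi₀⟩ := Finite.exists_max l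
    exact ⟨l i₀, hi₀, h i₀⟩
  | inl _ =>
    cases isEmpty_or_nonempty κ' with
    | inr _ =>
      obtain ⟨j₀, hj₀⟩ := Finite.exists_min u
      exact ⟨u j₀, isEmptyElim, hj₀⟩
    | inl _ => exact ⟨Classical.arbitrary α, isEmptyElim, isEmptyElim⟩

lemma Matrix.mulVec_finCons_apply {R ι : Type*} [NonUnitalNonAssocSemiring R] {n : ℕ}
    (B : Matrix ι (Fin (n + 1)) R) (x : R) (q : Fin n → R) (i : ι) :
    (B *ᵥ Fin.cons x q) i = Bᵀ 0 i * x + (B.submatrix id Fin.succ *ᵥ q) i := by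
  simp [mulVec, dotProduct, Fin.sum_univ_succ]

section FourierMotzkin

variable {𝕜 : Type*} [Field 𝕜] [LinearOrder 𝕜] {ι : Type*} [DecidableEq ι]

abbrev FourierMotzkinRow (a : ι → 𝕜) : Type _ :=
  {i // a i = 0} ⊕ ({i // 0 < a i} × {j // a j < 0})

def fourierMotzkinWeights (a : ι → 𝕜) : Matrix (FourierMotzkinRow a) ι 𝕜 :=
  Matrix.of fun
    | .inl i => Pi.single i.1 1
    | .inr (i, j) => Pi.single i.1 (a i)⁻¹ - Pi.single j.1 (a j)⁻¹

variable (a : ι → 𝕜)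

lemma fourierMotzkinWeights_nonneg [IsStrictOrderedRing 𝕜] (r : FourierMotzkinRow a) (k : ι) :
    0 ≤ fourierMotzkinWeights a r k := by
  rcases r with i | ⟨i, j⟩
  · have : (0 : ι → 𝕜) ≤ Pi.single i.1 1 := by simp
    exact this k
  · have hi : (0 : ι → 𝕜) ≤ Pi.single i.1 (a i)⁻¹ := by simpa using i.2.le
    have hj : Pi.single j.1 (a j)⁻¹ ≤ (0 : ι → 𝕜) := by simpa using j.2.le
    exact sub_nonneg.mpr (hj.trans hi) k

variable [Fintype ι]

@[simp]
lemma fourierMotzkinWeights_mulVec_inl (v : ι → 𝕜) (i : {i // a i = 0}) :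
    (fourierMotzkinWeights a *ᵥ v) (.inl i) = v i := by
  simp [mulVec, fourierMotzkinWeights]

@[simp]
lemma fourierMotzkinWeights_mulVec_inr (v : ι → 𝕜) (i : {i // 0 < a i}) (j : {j // a j < 0}) :
    (fourierMotzkinWeights a *ᵥ v) (.inr (i, j)) = v i / a i - v j / a j := by
  change (Pi.single i.1 (a i)⁻¹ - Pi.single j.1 (a j)⁻¹) ⬝ᵥ v = _
  rw [sub_dotProduct, single_dotProduct, single_dotProduct, inv_mul_eq_div, inv_mul_eq_div]

lemma fourierMotzkinWeights_mulVec_self : fourierMotzkinWeights a *ᵥ a = 0 := by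
  ext (i | ⟨i, j⟩)
  · simpa using i.2
  · simp [div_self i.2.ne', div_self j.2.ne]

lemma exists_forall_mul_le_of_nonneg_fourierMotzkinWeights_mulVec [IsStrictOrderedRing 𝕜]
    {c : ι → 𝕜} (hc : 0 ≤ fourierMotzkinWeights a *ᵥ c) : ∃ x, ∀ k, a k * x ≤ c k := by
  obtain ⟨x, hlow, hup⟩ := exists_forall_le_and_forall_ge
    (fun j : {j // a j < 0} => c j / a j) (fun i : {i // 0 < a i} => c i / a i)
    fun j i => by simpa using hc (.inr (i, j))
  refine ⟨x, fun k => ?_⟩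
  rcases lt_trichotomy (a k) 0 with hk | hk | hk
  · exact (div_le_iff_of_neg' hk).mp (hlow ⟨k, hk⟩)
  · simpa [hk] using hc (.inl ⟨k, hk⟩)
  · exact (le_div_iff₀' hk).mp (hup ⟨k, hk⟩)

end FourierMotzkin

section Farkas

variable {𝕜 : Type*} [Field 𝕜] [LinearOrder 𝕜] [IsStrictOrderedRing 𝕜] {ι : Type*} [Fintype ι]

def IsFarkasCertificate {n : Type*} [Fintype n] (B : Matrix ι n 𝕜) (b : ι → 𝕜) (t : ι → 𝕜) :
    Prop :=
  0 ≤ t ∧ Bᵀ *ᵥ t = 0 ∧ t ⬝ᵥ b < 0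

lemma IsFarkasCertificate.not_mulVec_le {n : Type*} [Fintype n] {B : Matrix ι n 𝕜} {b t : ι → 𝕜}
    (ht : IsFarkasCertificate B b t) (p : n → 𝕜) : ¬ B *ᵥ p ≤ b := by
  obtain ⟨ht, htB, htb⟩ := ht
  intro hp
  have : t ⬝ᵥ (B *ᵥ p) = 0 := by
    rw [dotProduct_mulVec, ← mulVec_transpose, htB, zero_dotProduct]
  exact htb.not_ge (this ▸ dotProduct_le_dotProduct_of_nonneg_left hp ht)

section Elimination

variable [DecidableEq ι] {n : ℕ} (B : Matrix ι (Fin (n + 1)) 𝕜) (b : ι → 𝕜)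

lemma exists_mulVec_le_of_fourierMotzkin {q : Fin n → 𝕜}
    (hq : (fourierMotzkinWeights (Bᵀ 0) * B.submatrix id Fin.succ) *ᵥ q ≤
      fourierMotzkinWeights (Bᵀ 0) *ᵥ b) :
    ∃ p, B *ᵥ p ≤ b := by
  have hc : 0 ≤ fourierMotzkinWeights (Bᵀ 0) *ᵥ (b - B.submatrix id Fin.succ *ᵥ q) := by
    rw [mulVec_sub, mulVec_mulVec]
    exact sub_nonneg.mpr hq
  obtain ⟨x, hx⟩ := exists_forall_mul_le_of_nonneg_fourierMotzkinWeights_mulVec _ hc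
  refine ⟨Fin.cons x q, fun i => ?_⟩
  rw [mulVec_finCons_apply]
  linarith [hx i, Pi.sub_apply b (B.submatrix id Fin.succ *ᵥ q) i]

lemma IsFarkasCertificate.of_fourierMotzkin {t : FourierMotzkinRow (Bᵀ 0) → 𝕜}
    (ht : IsFarkasCertificate (fourierMotzkinWeights (Bᵀ 0) * B.submatrix id Fin.succ)
      (fourierMotzkinWeights (Bᵀ 0) *ᵥ b) t) :
    IsFarkasCertificate B b ((fourierMotzkinWeights (Bᵀ 0))ᵀ *ᵥ t) := by
  obtain ⟨ht, htB, htb⟩ := ht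
  refine ⟨fun i => ?_, ?_, ?_⟩
  · exact Finset.sum_nonneg fun r _ => mul_nonneg (fourierMotzkinWeights_nonneg _ r i) (ht r)
  · ext j
    refine Fin.cases ?_ (fun j => ?_) j
    · change Bᵀ 0 ⬝ᵥ _ = 0
      rw [dotProduct_mulVec, vecMul_transpose, fourierMotzkinWeights_mulVec_self, zero_dotProduct]
    · change ((B.submatrix id Fin.succ)ᵀ *ᵥ _) j = 0
      rw [mulVec_mulVec, ← transpose_mul, htB, Pi.zero_apply]
  · rwa [dotProduct_comm, dotProduct_mulVec, vecMul_transpose, dotProduct_comm]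

end Elimination

theorem exists_isFarkasCertificate_of_not_exists_mulVec_le {n : ℕ} (B : Matrix ι (Fin n) 𝕜)
    (b : ι → 𝕜) (h : ¬ ∃ p, B *ᵥ p ≤ b) : ∃ t, IsFarkasCertificate B b t := by
  classical
  induction n generalizing ι with
  | zero =>
    obtain ⟨i, hi⟩ : ∃ i, b i < 0 := by simpa [Pi.le_def] using h
    exact ⟨Pi.single i 1, by simp, Subsingleton.elim _ _, by simpa using hi⟩
  | succ n ih =>
    obtain ⟨t, ht⟩ := ih _ _ fun ⟨q, hq⟩ => h (exists_mulVec_le_of_fourierMotzkin B b hq)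
    exact ⟨_, ht.of_fourierMotzkin B b⟩

theorem exists_mulVec_le_iff_forall_not_isFarkasCertificate {n : ℕ} (B : Matrix ι (Fin n) 𝕜)
    (b : ι → 𝕜) : (∃ p, B *ᵥ p ≤ b) ↔ ∀ t, ¬ IsFarkasCertificate B b t := by
  refine ⟨fun ⟨p, hp⟩ t ht => ht.not_mulVec_le p hp, fun h => ?_⟩
  by_contra hinf
  obtain ⟨t, ht⟩ := exists_isFarkasCertificate_of_not_exists_mulVec_le B b hinf
  exact h t ht

end Farkas

/-- Farkas' lemma (inequality form): `B·p ≤ b` has a solution iff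
for every `t ≥ 0` with `Bᵀ t = 0` one has `tᵀ b ≥ 0`. -/
theorem stmt4 (m n : ℕ) (B : Matrix (Fin m) (Fin n) ℝ) (b : Fin m → ℝ) :
    (∃ p : Fin n → ℝ, B *ᵥ p ≤ b) ↔
    (∀ t : Fin m → ℝ, 0 ≤ t → Bᵀ *ᵥ t = 0 → 0 ≤ t ⬝ᵥ b) := by
  simpa [IsFarkasCertificate] using exists_mulVec_le_iff_forall_not_isFarkasCertificate B b
end

section
/- Let A^g be a g-inverse of A and suppose A·q = c is consistent. Then A·q = c has a nonnegative solution q ≥ 0 if and only if the system (I − A^g A)·p ≤ A^g c has a solution p. -/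
open Matrix

/-- If `Ag` is a g-inverse of `A` and `A·q = c` is consistent, then
`A·q = c` has a nonnegative solution iff `(I − Ag·A)·p ≤ Ag·c` has a solution. -/
theorem stmt6 (m n : ℕ) (A : Matrix (Fin m) (Fin n) ℝ) (Ag : Matrix (Fin n) (Fin m) ℝ)
    (c : Fin m → ℝ) (hg : A * Ag * A = A) (hcons : ∃ q : Fin n → ℝ, A *ᵥ q = c) :
    (∃ q : Fin n → ℝ, 0 ≤ q ∧ A *ᵥ q = c) ↔
    (∃ p : Fin n → ℝ, (1 - Ag * A) *ᵥ p ≤ Ag *ᵥ c) := by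
  constructor
  · rintro ⟨q, hq0, hq⟩
    refine ⟨-q, fun i => ?_⟩
    have : (1 - Ag * A) *ᵥ (-q) = Ag *ᵥ c - q := by
      rw [sub_mulVec, one_mulVec, ← hq, mulVec_mulVec]
      simp [mulVec_neg, sub_eq_add_neg]
      abel
    rw [this]
    have h2 := hq0 i
    simp only [Pi.zero_apply] at h2
    simp only [Pi.sub_apply]
    linarith
  · rintro ⟨p, hp⟩
    obtain ⟨q0, hq0⟩ := hcons
    refine ⟨Ag *ᵥ c - (1 - Ag * A) *ᵥ p, fun i => by simpa using sub_nonneg.mpr (hp i), ?_⟩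
    have hAAgc : A *ᵥ (Ag *ᵥ c) = c := by
      rw [← hq0, mulVec_mulVec, mulVec_mulVec, hg]
    rw [mulVec_sub, hAAgc, sub_mulVec, one_mulVec, mulVec_sub, mulVec_mulVec,
      ← Matrix.mul_assoc, hg]
    simp
end

section
/- Let A^g be a g-inverse of A and suppose A·q = c is consistent. Then A·q = c has a nonnegative solution if and only if for every t ≥ 0 with (I − A^g A)ᵀ t = 0 one has tᵀ A^g c ≥ 0; equivalently, the minimum of tᵀ A^g c over { t ≥ 0 : (I − A^g A)ᵀ t = 0 } equals 0 (the minimum is always ≤ 0 since t = 0 is feasible). -/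
/-!
The whole statement rests on Farkas' lemma: either `A q = c` has a solution `q ≥ 0`, or some `y`
has `Aᵀ y ≥ 0` and `c ⬝ y < 0`. The g-inverse identity `A Ag A = A` puts `t = Aᵀ y` in the kernel
of `(I - Ag A)ᵀ`, and consistency gives `A Ag c = c`, so `t ⬝ Ag c = y ⬝ c < 0`. Conversely, for
`t` in that kernel and any solution `q`, `t ⬝ Ag c = t ⬝ q`, which is `≥ 0` when `t, q ≥ 0`.
Farkas' lemma itself is proved by Fourier–Motzkin elimination of one generator at a time.
-/

namespace Matrix

variable {𝕜 ι : Type*} [Fintype ι]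

section Projection

variable [Field 𝕜] [DecidableEq ι]

/-- The projection onto the hyperplane `y⊥` along `d` (meaningful when `d ⬝ᵥ y ≠ 0`). -/
def obliqueProj (d y : ι → 𝕜) : Matrix ι ι 𝕜 :=
  1 - (d ⬝ᵥ y)⁻¹ • vecMulVec d y

theorem obliqueProj_mulVec (d y v : ι → 𝕜) :
    obliqueProj d y *ᵥ v = v - ((y ⬝ᵥ v) / (d ⬝ᵥ y)) • d := by
  rw [obliqueProj, sub_mulVec, one_mulVec, smul_mulVec, vecMulVec_mulVec, op_smul_eq_smul,
    smul_smul, inv_mul_eq_div]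

theorem obliqueProj_mulVec_self {d y : ι → 𝕜} (h : d ⬝ᵥ y ≠ 0) : obliqueProj d y *ᵥ d = 0 := by
  rw [obliqueProj_mulVec, dotProduct_comm, div_self h, one_smul, sub_self]

theorem eq_smul_of_obliqueProj_mulVec_eq_zero {d y v : ι → 𝕜}
    (h : obliqueProj d y *ᵥ v = 0) : v = ((y ⬝ᵥ v) / (d ⬝ᵥ y)) • d := by
  rwa [obliqueProj_mulVec, sub_eq_zero] at h

end Projection

section Farkas

variable [Field 𝕜] [LinearOrder 𝕜] [IsStrictOrderedRing 𝕜]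

theorem farkas_empty (B : Matrix (Fin 0) ι 𝕜) (c : ι → 𝕜) :
    (∃ x, 0 ≤ x ∧ x ᵥ* B = c) ∨ ∃ y, 0 ≤ B *ᵥ y ∧ c ⬝ᵥ y < 0 := by
  by_cases hc : c = 0
  · exact Or.inl ⟨0, le_rfl, by rw [hc, empty_vecMul]⟩
  · have hcc : 0 < c ⬝ᵥ c :=
      (Finset.sum_nonneg fun i _ => mul_self_nonneg (c i)).lt_of_ne
        (Ne.symm (dotProduct_self_eq_zero.not.2 hc))
    exact Or.inr ⟨-c, fun i => i.elim0, by rwa [dotProduct_neg, neg_lt_zero]⟩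

variable [DecidableEq ι]

/- If the certificate `y` for the rows `B` is violated by the new row `d`, project `B` and `c`
along `d` onto `y⊥`: a solution of the projected system differs from `c` by a multiple of `d`,
nonnegative because `c ⬝ y < 0` and `d ⬝ y < 0`, and a certificate `z` of the projected system
gives the certificate `Pᵀ z`, which is orthogonal to `d`. -/
theorem farkas_cons {n : ℕ}
    (ih : ∀ (B : Matrix (Fin n) ι 𝕜) (c : ι → 𝕜),
      (∃ x, 0 ≤ x ∧ x ᵥ* B = c) ∨ ∃ y, 0 ≤ B *ᵥ y ∧ c ⬝ᵥ y < 0)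
    (d : ι → 𝕜) (B : Fin n → ι → 𝕜) (c : ι → 𝕜) :
    (∃ x, 0 ≤ x ∧ x ᵥ* of (vecCons d B) = c) ∨
      ∃ y, 0 ≤ of (vecCons d B) *ᵥ y ∧ c ⬝ᵥ y < 0 := by
  obtain ⟨x, hx, rfl⟩ | ⟨y, hy, hcy⟩ := ih (of B) c
  · exact Or.inl ⟨vecCons 0 x, Fin.le_cons.2 ⟨le_rfl, hx⟩, by
      rw [cons_vecMul_cons, zero_smul, zero_add]⟩
  obtain hdy | hdy := le_or_gt 0 (d ⬝ᵥ y)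
  · exact Or.inr ⟨y, by rw [cons_mulVec]; exact Fin.le_cons.2 ⟨hdy, hy⟩, hcy⟩
  set P := obliqueProj d y
  obtain ⟨x, hx, hxc⟩ | ⟨z, hz, hcz⟩ := ih (of B * Pᵀ) (P *ᵥ c)
  · have hP : P *ᵥ (c - x ᵥ* of B) = 0 := by
      rw [mulVec_sub, ← hxc, ← vecMul_transpose, vecMul_vecMul, sub_self]
    have hyc : y ⬝ᵥ (c - x ᵥ* of B) < 0 := by
      have hyx : y ⬝ᵥ (x ᵥ* of B) = x ⬝ᵥ (of B *ᵥ y) := by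
        rw [dotProduct_comm, dotProduct_mulVec]
      rw [dotProduct_sub, dotProduct_comm, hyx]
      linarith [dotProduct_nonneg_of_nonneg hx hy]
    refine Or.inl ⟨vecCons ((y ⬝ᵥ (c - x ᵥ* of B)) / (d ⬝ᵥ y)) x,
      Fin.le_cons.2 ⟨div_nonneg_of_nonpos hyc.le hdy.le, hx⟩, ?_⟩
    rw [cons_vecMul_cons, ← eq_smul_of_obliqueProj_mulVec_eq_zero hP, sub_add_cancel]
  · refine Or.inr ⟨Pᵀ *ᵥ z, ?_, ?_⟩
    · rw [cons_mulVec]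
      refine Fin.le_cons.2 ⟨?_, ?_⟩
      · rw [dotProduct_mulVec, vecMul_transpose, obliqueProj_mulVec_self hdy.ne,
          zero_dotProduct]
        exact le_rfl
      · rw [mulVec_mulVec]
        exact hz
    · rwa [dotProduct_mulVec, vecMul_transpose]

theorem farkas {n : ℕ} (B : Matrix (Fin n) ι 𝕜) (c : ι → 𝕜) :
    (∃ x, 0 ≤ x ∧ x ᵥ* B = c) ∨ ∃ y, 0 ≤ B *ᵥ y ∧ c ⬝ᵥ y < 0 := by
  induction n generalizing c with
  | zero => exact farkas_empty B c
  | succ n ih =>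
    obtain ⟨d, B, rfl⟩ : ∃ (d : ι → 𝕜) (B' : Fin n → ι → 𝕜), B = of (vecCons d B') :=
      ⟨B 0, Fin.tail B, (Fin.cons_self_tail B).symm⟩
    exact farkas_cons ih d B c

end Farkas

theorem dotProduct_mulVec_eq_of_transpose_mulVec_eq_zero {R m n : Type*} [CommRing R]
    [Fintype m] [Fintype n] [DecidableEq n] {A : Matrix m n R} {G : Matrix n m R}
    {q t : n → R} {c : m → R} (hq : A *ᵥ q = c) (ht : (1 - G * A)ᵀ *ᵥ t = 0) :
    t ⬝ᵥ (G *ᵥ c) = t ⬝ᵥ q := by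
  have h : t ⬝ᵥ ((1 - G * A) *ᵥ q) = 0 := by
    rw [dotProduct_mulVec, ← mulVec_transpose, ht, zero_dotProduct]
  rwa [sub_mulVec, one_mulVec, ← mulVec_mulVec, hq, dotProduct_sub, sub_eq_zero, eq_comm] at h

theorem exists_nonneg_mulVec_eq_of_forall_nonneg [Field 𝕜] [LinearOrder 𝕜]
    [IsStrictOrderedRing 𝕜] {m : Type*} [Fintype m] [DecidableEq m] {n : ℕ}
    {A : Matrix m (Fin n) 𝕜} {G : Matrix (Fin n) m 𝕜} {c : m → 𝕜} (hg : A * G * A = A)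
    (hc : A *ᵥ (G *ᵥ c) = c)
    (h : ∀ t, 0 ≤ t → (1 - G * A)ᵀ *ᵥ t = 0 → 0 ≤ t ⬝ᵥ (G *ᵥ c)) :
    ∃ q, 0 ≤ q ∧ A *ᵥ q = c := by
  obtain ⟨q, hq, hAq⟩ | ⟨y, hy, hcy⟩ := farkas Aᵀ c
  · exact ⟨q, hq, by rwa [vecMul_transpose] at hAq⟩
  have hker : (1 - G * A)ᵀ *ᵥ (Aᵀ *ᵥ y) = 0 := by
    rw [mulVec_mulVec, ← transpose_mul, Matrix.mul_sub, Matrix.mul_one, ← Matrix.mul_assoc, hg,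
      sub_self, transpose_zero, zero_mulVec]
  have hval : (Aᵀ *ᵥ y) ⬝ᵥ (G *ᵥ c) = c ⬝ᵥ y := by
    rw [← vecMul_transpose, transpose_transpose, ← dotProduct_mulVec, hc, dotProduct_comm]
  exact absurd (hval ▸ h _ hy hker) hcy.not_ge

end Matrix

open Matrix

/-- With `Ag` a g-inverse of `A` and `A·q = c` consistent: `A·q = c` has a
nonnegative solution iff every `t ≥ 0` with `(I − Ag·A)ᵀ t = 0` satisfies `tᵀ Ag c ≥ 0`;
equivalently, `0` is the least value of `tᵀ Ag c` over the feasible set (the minimum is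
always ≤ 0 since `t = 0` is feasible, which is witnessed by `0` belonging to the set). -/
theorem stmt7 (m n : ℕ) (A : Matrix (Fin m) (Fin n) ℝ) (Ag : Matrix (Fin n) (Fin m) ℝ)
    (c : Fin m → ℝ) (hg : A * Ag * A = A) (hcons : ∃ q : Fin n → ℝ, A *ᵥ q = c) :
    ((∃ q : Fin n → ℝ, 0 ≤ q ∧ A *ᵥ q = c) ↔
      (∀ t : Fin n → ℝ, 0 ≤ t → (1 - Ag * A)ᵀ *ᵥ t = 0 → 0 ≤ t ⬝ᵥ (Ag *ᵥ c))) ∧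
    ((∃ q : Fin n → ℝ, 0 ≤ q ∧ A *ᵥ q = c) ↔
      IsLeast {v : ℝ | ∃ t : Fin n → ℝ,
        0 ≤ t ∧ (1 - Ag * A)ᵀ *ᵥ t = 0 ∧ v = t ⬝ᵥ (Ag *ᵥ c)} 0) := by
  have hc : A *ᵥ (Ag *ᵥ c) = c := by
    obtain ⟨q, rfl⟩ := hcons
    rw [mulVec_mulVec, mulVec_mulVec, hg]
  have key : (∃ q : Fin n → ℝ, 0 ≤ q ∧ A *ᵥ q = c) ↔
      ∀ t : Fin n → ℝ, 0 ≤ t → (1 - Ag * A)ᵀ *ᵥ t = 0 → 0 ≤ t ⬝ᵥ (Ag *ᵥ c) := by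
    refine ⟨fun ⟨q, hq, hAq⟩ t ht hker => ?_, exists_nonneg_mulVec_eq_of_forall_nonneg hg hc⟩
    rw [dotProduct_mulVec_eq_of_transpose_mulVec_eq_zero hAq hker]
    exact dotProduct_nonneg_of_nonneg ht hq
  refine ⟨key, key.trans ⟨fun h => ⟨⟨0, le_rfl, mulVec_zero _, (zero_dotProduct _).symm⟩, ?_⟩,
    fun h t ht hker => h.2 ⟨t, ht, hker, rfl⟩⟩⟩
  rintro v ⟨t, ht, hker, rfl⟩
  exact h t ht hker
end

section
/- Invariance under choice of g-inverse: Let A₁^g and A₂^g be two g-inverses of A and suppose A·q = c is consistent. If there exists p₁ with (I − A₁^g A)·p₁ ≤ A₁^g c, then there exists p₂ with (I − A₂^g A)·p₂ ≤ A₂^g c. -/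
open Matrix

/-! For a g-inverse `G` of `A`, the range of `I - G A` is exactly the kernel of `A`, so the
system `(I - G A) p ≤ G c` is solvable iff some `x ∈ ker A` satisfies `x ≤ G c`. When `A q = c`
is consistent, `A G c = c` for every g-inverse `G`, so `G₂ c - G₁ c` lies in `ker A`, and
translating such an `x` by this vector transfers solvability from `G₁` to `G₂`. -/

namespace Matrix

variable {m n R : Type*} [Fintype m] [Fintype n] [Ring R]
  {A : Matrix m n R} {G : Matrix n m R}

theorem mulVec_mulVec_of_mulVec_eq (hG : A * G * A = A) {q : n → R} {c : m → R}
    (hq : A *ᵥ q = c) : A *ᵥ (G *ᵥ c) = c := by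
  rw [← hq, mulVec_mulVec, mulVec_mulVec, hG]

variable [DecidableEq n]

theorem mulVec_one_sub_mul_mulVec_eq_zero (hG : A * G * A = A) (p : n → R) :
    A *ᵥ ((1 - G * A) *ᵥ p) = 0 := by
  rw [mulVec_mulVec, Matrix.mul_sub, Matrix.mul_one, ← Matrix.mul_assoc, hG, sub_self,
    zero_mulVec]

theorem one_sub_mul_mulVec_of_mulVec_eq_zero {x : n → R} (hx : A *ᵥ x = 0) :
    (1 - G * A) *ᵥ x = x := by
  rw [sub_mulVec, one_mulVec, ← mulVec_mulVec, hx, mulVec_zero, sub_zero]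

theorem exists_one_sub_mul_mulVec_le_iff [LE R] (hG : A * G * A = A) (b : n → R) :
    (∃ p, (1 - G * A) *ᵥ p ≤ b) ↔ ∃ x, A *ᵥ x = 0 ∧ x ≤ b := by
  constructor
  · rintro ⟨p, hp⟩
    exact ⟨_, mulVec_one_sub_mul_mulVec_eq_zero hG p, hp⟩
  · rintro ⟨x, hx, hxb⟩
    exact ⟨x, (one_sub_mul_mulVec_of_mulVec_eq_zero hx).trans_le hxb⟩

end Matrix

/-- Invariance under the choice of g-inverse: if `(I − A₁g·A)·p₁ ≤ A₁g·c`
has a solution, then `(I − A₂g·A)·p₂ ≤ A₂g·c` has a solution. -/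
theorem stmt10 (m n : ℕ) (A : Matrix (Fin m) (Fin n) ℝ)
    (A1g A2g : Matrix (Fin n) (Fin m) ℝ) (c : Fin m → ℝ)
    (hg1 : A * A1g * A = A) (hg2 : A * A2g * A = A)
    (hcons : ∃ q : Fin n → ℝ, A *ᵥ q = c)
    (h1 : ∃ p1 : Fin n → ℝ, (1 - A1g * A) *ᵥ p1 ≤ A1g *ᵥ c) :
    ∃ p2 : Fin n → ℝ, (1 - A2g * A) *ᵥ p2 ≤ A2g *ᵥ c := by
  obtain ⟨q, hq⟩ := hcons
  obtain ⟨x, hx, hxc⟩ := (exists_one_sub_mul_mulVec_le_iff hg1 _).mp h1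
  have hshift : A *ᵥ (A2g *ᵥ c - A1g *ᵥ c) = 0 := by
    rw [mulVec_sub, mulVec_mulVec_of_mulVec_eq hg1 hq, mulVec_mulVec_of_mulVec_eq hg2 hq,
      sub_self]
  refine (exists_one_sub_mul_mulVec_le_iff hg2 _).mpr
    ⟨x + (A2g *ᵥ c - A1g *ᵥ c), by rw [mulVec_add, hx, hshift, add_zero], ?_⟩
  calc x + (A2g *ᵥ c - A1g *ᵥ c) ≤ A1g *ᵥ c + (A2g *ᵥ c - A1g *ᵥ c) := by gcongr
    _ = A2g *ᵥ c := add_sub_cancel _ _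
end

section
/- For the erasure-channel example: let P_{XY}(x,y) = (1−α)/2 if x=y and α/2 if x≠y for binary X,Y, and let Z = (X,Y) with probability γ and Z = erasure symbol with probability 1−γ (independently). Then Sim_Y(Z→X) holds if and only if γ ≥ 1 − 2α. -/
/-- Joint PMF of binary `X, Y`: `P_{XY}(x,y) = (1-α)/2` if `x = y`, `α/2` otherwise. -/
noncomputable def PXY (α : ℝ) (x y : Fin 2) : ℝ := if x = y then (1 - α) / 2 else α / 2

/-- Joint PMF of `Y` and `Z`, where `Z = (X,Y)` with probability `γ` and
`Z = φ` (the erasure symbol, `Sum.inr ()`) with probability `1 - γ`. -/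
noncomputable def PYZ (α γ : ℝ) (y : Fin 2) (z : (Fin 2 × Fin 2) ⊕ Unit) : ℝ :=
  match z with
  | Sum.inl (x', y') => if y' = y then γ * PXY α x' y' else 0
  | Sum.inr _ => (1 - γ) * (1 / 2)

/-!
Necessity: on the erasure event `Y` is uniform and independent of the simulated `X̄`, so `X̄ ≠ Y`
there with probability `1/2`; hence `α = P(X̄ ≠ Y) ≥ (1 - γ)/2`.
Sufficiency: on erasure output a fair coin, otherwise pass `Y` through a binary symmetric
channel whose crossover probability `e` solves `γ e + (1 - γ)/2 = α`; such an `e ∈ [0, 1]`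
exists exactly when `1 - 2α ≤ γ`.
-/

open Finset

lemma PXY_nonneg {α : ℝ} (hα0 : 0 ≤ α) (hα1 : α ≤ 1) (x y : Fin 2) : 0 ≤ PXY α x y := by
  unfold PXY; split_ifs <;> linarith

lemma sum_PXY_left (α : ℝ) (y : Fin 2) : ∑ x, PXY α x y = 1 / 2 := by
  fin_cases y <;> simp [PXY, Fin.sum_univ_two] <;> ring

lemma sum_PYZ_mul (α γ : ℝ) (f : (Fin 2 × Fin 2) ⊕ Unit → ℝ) (y : Fin 2) :
    ∑ z, PYZ α γ y z * f z =
      γ * ∑ x, PXY α x y * f (.inl (x, y)) + (1 - γ) / 2 * f (.inr ()) := by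
  simp only [Fintype.sum_sum_type, Fintype.sum_prod_type, PYZ, ite_mul, zero_mul,
    sum_ite_eq', mem_univ, if_true, univ_unique, sum_singleton,
    mul_sum, mul_assoc]
  ring

lemma one_sub_two_mul_le_of_sim {α γ : ℝ} (hα0 : 0 ≤ α) (hα : α ≤ 1 / 2) (hγ0 : 0 ≤ γ)
    {K : (Fin 2 × Fin 2) ⊕ Unit → Fin 2 → ℝ} (hK0 : ∀ z x, 0 ≤ K z x)
    (hK1 : ∑ x, K (.inr ()) x = 1) (hK : ∀ y x, ∑ z, PYZ α γ y z * K z x = PXY α x y) :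
    1 - 2 * α ≤ γ := by
  have hcross (y x : Fin 2) : 0 ≤ γ * ∑ x', PXY α x' y * K (.inl (x', y)) x :=
    mul_nonneg hγ0 <| sum_nonneg fun x' _ =>
      mul_nonneg (PXY_nonneg hα0 (by linarith) _ _) (hK0 _ _)
  have h01 := hK 0 1
  have h10 := hK 1 0
  rw [sum_PYZ_mul] at h01 h10
  have herasure : (1 - γ) / 2 * K (.inr ()) 0 + (1 - γ) / 2 * K (.inr ()) 1 = (1 - γ) / 2 := by
    rw [← mul_add, ← Fin.sum_univ_two (fun x => K (.inr ()) x), hK1, mul_one]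
  rw [PXY, if_neg (by decide)] at h01 h10
  linarith [hcross 0 1, hcross 1 0]

def bsc (e : ℝ) (y x : Fin 2) : ℝ := if x = y then 1 - e else e

noncomputable def erasureSim (e : ℝ) : (Fin 2 × Fin 2) ⊕ Unit → Fin 2 → ℝ :=
  Sum.elim (fun p => bsc e p.2) (fun _ _ => 1 / 2)

lemma erasureSim_nonneg {e : ℝ} (he0 : 0 ≤ e) (he1 : e ≤ 1) (z : (Fin 2 × Fin 2) ⊕ Unit)
    (x : Fin 2) : 0 ≤ erasureSim e z x := by
  rcases z with ⟨_, y⟩ | _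
  · simp only [erasureSim, Sum.elim_inl, bsc]; split_ifs <;> linarith
  · norm_num [erasureSim]

lemma sum_erasureSim (e : ℝ) (z : (Fin 2 × Fin 2) ⊕ Unit) : ∑ x, erasureSim e z x = 1 := by
  rcases z with ⟨_, y⟩ | _
  · fin_cases y <;> simp [erasureSim, bsc, Fin.sum_univ_two]
  · norm_num [erasureSim, Fin.sum_univ_two]

lemma sum_PYZ_mul_erasureSim {α γ e : ℝ} (he : γ * e + (1 - γ) / 2 = α) (y x : Fin 2) :
    ∑ z, PYZ α γ y z * erasureSim e z x = PXY α x y := by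
  have hbsc : ∑ x', PXY α x' y * erasureSim e (.inl (x', y)) x = 1 / 2 * bsc e y x := by
    simp only [erasureSim, Sum.elim_inl, ← sum_mul, sum_PXY_left]
  rw [sum_PYZ_mul, hbsc]
  simp only [erasureSim, Sum.elim_inr, bsc, PXY]
  split_ifs <;> linarith

lemma exists_crossover {α γ : ℝ} (hα : α ≤ 1 / 2) (hγ0 : 0 ≤ γ) (h : 1 - 2 * α ≤ γ) :
    ∃ e, 0 ≤ e ∧ e ≤ 1 ∧ γ * e + (1 - γ) / 2 = α := by
  rcases hγ0.eq_or_lt with rfl | hγ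
  · exact ⟨0, le_rfl, zero_le_one, by linarith⟩
  · refine ⟨(α - (1 - γ) / 2) / γ, div_nonneg (by linarith) hγ.le,
      (div_le_one hγ).2 (by linarith), ?_⟩
    rw [mul_div_cancel₀ _ hγ.ne']
    ring

theorem stmt19_general (α γ : ℝ) (hα0 : 0 ≤ α) (hα : α ≤ 1 / 2) (hγ0 : 0 ≤ γ) :
    (∃ Pbar : (Fin 2 × Fin 2) ⊕ Unit → Fin 2 → ℝ,
      (∀ z x, 0 ≤ Pbar z x) ∧ (∀ z, ∑ x, Pbar z x = 1) ∧
      (∀ y x : Fin 2, ∑ z, PYZ α γ y z * Pbar z x = PXY α x y)) ↔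
    1 - 2 * α ≤ γ := by
  constructor
  · rintro ⟨K, hK0, hK1, hK⟩
    exact one_sub_two_mul_le_of_sim hα0 hα hγ0 hK0 (hK1 _) hK
  · intro h
    obtain ⟨e, he0, he1, he⟩ := exists_crossover hα hγ0 h
    exact ⟨erasureSim e, erasureSim_nonneg he0 he1, sum_erasureSim e,
      sum_PYZ_mul_erasureSim he⟩

/-- For the erasure-channel example, `Sim_Y(Z → X)` holds
(there is a conditional PMF `Pbar = P_{X̄|Z}` with
`∑ z, P_{YZ}(y,z)·Pbar(x|z) = P_{YX}(y,x)` for all `x, y`) iff `γ ≥ 1 − 2α`. -/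
theorem stmt19 (α γ : ℝ) (hα0 : 0 ≤ α) (hα : α ≤ 1 / 2) (hγ0 : 0 ≤ γ) (hγ1 : γ ≤ 1) :
    (∃ Pbar : (Fin 2 × Fin 2) ⊕ Unit → Fin 2 → ℝ,
      (∀ z x, 0 ≤ Pbar z x) ∧ (∀ z, ∑ x, Pbar z x = 1) ∧
      (∀ y x : Fin 2, ∑ z, PYZ α γ y z * Pbar z x = PXY α x y)) ↔
    1 - 2 * α ≤ γ :=
  stmt19_general α γ hα0 hα hγ0
end
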